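/- Joint concavity of the Tsallis relative operator entropy: for positive invertible operators ρ₁, ρ₂, σ₁, σ₂, nonnegative α, β, and q ∈ [0,1), T_q(αρ₁+βρ₂ || ασ₁+βσ₂) ≥ α T_q(ρ₁||σ₁) + β T_q(ρ₂||σ₂) in the Loewner order. -/

import Mathlib

open Matrix
open scoped ComplexOrder

noncomputable def mpow {d : ℕ} (A : Matrix (Fin d) (Fin d) ℂ) (r : ℝ) :
    Matrix (Fin d) (Fin d) ℂ :=
  if hA : A.IsHermitian then
    (hA.eigenvectorUnitary : Matrix (Fin d) (Fin d) ℂ) *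
      Matrix.diagonal (fun i => ((hA.eigenvalues i ^ r : ℝ) : ℂ)) *
      star (hA.eigenvectorUnitary : Matrix (Fin d) (Fin d) ℂ)
  else 0

noncomputable def Tq {d : ℕ} (ρ σ : Matrix (Fin d) (Fin d) ℂ) (q : ℝ) :
    Matrix (Fin d) (Fin d) ℂ :=
  (((1 - q : ℝ) : ℂ))⁻¹ •
    (mpow ρ (1/2) * mpow (mpow ρ (-(1/2)) * σ * mpow ρ (-(1/2))) (1 - q) * mpow ρ (1/2) - ρ)

section mpowLemmas
variable {d : ℕ}

lemma mpow_def {A : Matrix (Fin d) (Fin d) ℂ} (hA : A.IsHermitian) (r : ℝ) :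
    mpow A r = (hA.eigenvectorUnitary : Matrix (Fin d) (Fin d) ℂ) *
      Matrix.diagonal (fun i => ((hA.eigenvalues i ^ r : ℝ) : ℂ)) *
      star (hA.eigenvectorUnitary : Matrix (Fin d) (Fin d) ℂ) := dif_pos hA

lemma mpow_isHermitian (A : Matrix (Fin d) (Fin d) ℂ) (r : ℝ) : (mpow A r).IsHermitian := by
  unfold mpow
  split
  · next hA =>
    rw [Matrix.star_eq_conjTranspose]
    exact Matrix.isHermitian_mul_mul_conjTranspose _
      (Matrix.isHermitian_diagonal_of_self_adjoint _ (by
        funext i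
        simp [Pi.star_apply, Complex.star_def, Complex.conj_ofReal]))
  · exact Matrix.isHermitian_zero

lemma star_mul_self_eigU {A : Matrix (Fin d) (Fin d) ℂ} (hA : A.IsHermitian) :
    star (hA.eigenvectorUnitary : Matrix (Fin d) (Fin d) ℂ) *
      (hA.eigenvectorUnitary : Matrix (Fin d) (Fin d) ℂ) = 1 :=
  Matrix.mem_unitaryGroup_iff'.mp hA.eigenvectorUnitary.2

lemma self_mul_star_eigU {A : Matrix (Fin d) (Fin d) ℂ} (hA : A.IsHermitian) :
    (hA.eigenvectorUnitary : Matrix (Fin d) (Fin d) ℂ) *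
      star (hA.eigenvectorUnitary : Matrix (Fin d) (Fin d) ℂ) = 1 :=
  Matrix.mem_unitaryGroup_iff.mp hA.eigenvectorUnitary.2

lemma mpow_mul_mpow {A : Matrix (Fin d) (Fin d) ℂ} (hA : A.PosDef) (r s : ℝ) :
    mpow A r * mpow A s = mpow A (r + s) := by
  rw [mpow_def hA.1, mpow_def hA.1, mpow_def hA.1]
  set U := (hA.1.eigenvectorUnitary : Matrix (Fin d) (Fin d) ℂ) with hU
  have h1 : star U * U = 1 := star_mul_self_eigU hA.1
  have h2 : ∀ X : Matrix (Fin d) (Fin d) ℂ, star U * (U * X) = X := fun X => by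
    rw [← Matrix.mul_assoc, h1, Matrix.one_mul]
  have hd : Matrix.diagonal (fun i => ((hA.1.eigenvalues i ^ r : ℝ) : ℂ)) *
      Matrix.diagonal (fun i => ((hA.1.eigenvalues i ^ s : ℝ) : ℂ)) =
      Matrix.diagonal (fun i => ((hA.1.eigenvalues i ^ (r + s) : ℝ) : ℂ)) := by
    rw [Matrix.diagonal_mul_diagonal]
    refine congrArg Matrix.diagonal (funext fun i => ?_)
    rw [← Complex.ofReal_mul, ← Real.rpow_add (hA.eigenvalues_pos i)]
  simp only [Matrix.mul_assoc, h2, ← hd]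

lemma qf_conj (M B : Matrix (Fin d) (Fin d) ℂ) (x : Fin d → ℂ) :
    star x ⬝ᵥ ((Mᴴ * B * M) *ᵥ x) = star (M *ᵥ x) ⬝ᵥ (B *ᵥ (M *ᵥ x)) := by
  simp [← Matrix.mulVec_mulVec, Matrix.dotProduct_mulVec, Matrix.star_mulVec,
    Matrix.vecMul_vecMul]

lemma posDef_conj {B : Matrix (Fin d) (Fin d) ℂ} (hB : B.PosDef)
    {M : Matrix (Fin d) (Fin d) ℂ} (hM : IsUnit M.det) :
    (M * B * Mᴴ).PosDef := by
  refine Matrix.PosDef.of_dotProduct_mulVec_pos (by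
    rw [← Matrix.conjTranspose_conjTranspose M]
    exact Matrix.isHermitian_mul_mul_conjTranspose _ hB.1) (fun x hx => ?_)
  have hMx : Mᴴ *ᵥ x ≠ 0 := by
    intro h
    apply hx
    have hdet : IsUnit (Mᴴ).det := by rw [Matrix.det_conjTranspose]; exact hM.star
    have := congrArg (fun v => (Mᴴ)⁻¹ *ᵥ v) h
    simpa [Matrix.mulVec_mulVec, Matrix.nonsing_inv_mul _ hdet] using this
  have : M * B * Mᴴ = (Mᴴ)ᴴ * B * Mᴴ := by rw [Matrix.conjTranspose_conjTranspose]
  rw [this, qf_conj]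
  exact hB.dotProduct_mulVec_pos hMx

lemma posSemidef_smul_real {n : Type*} [Fintype n] {M : Matrix n n ℂ} (hM : M.PosSemidef)
    {c : ℝ} (hc : 0 ≤ c) : ((c : ℂ) • M).PosSemidef := by
  refine Matrix.PosSemidef.of_dotProduct_mulVec_nonneg ?_ (fun x => ?_)
  · unfold Matrix.IsHermitian
    rw [Matrix.conjTranspose_smul, hM.1]
    congr 1
    simp [Complex.star_def, Complex.conj_ofReal]
  · rw [Matrix.smul_mulVec, dotProduct_smul, smul_eq_mul]
    exact mul_nonneg (by exact_mod_cast hc) (hM.dotProduct_mulVec_nonneg x)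

lemma mpow_zero {A : Matrix (Fin d) (Fin d) ℂ} (hA : A.IsHermitian) : mpow A 0 = 1 := by
  rw [mpow_def hA]
  have : (fun i => ((hA.eigenvalues i ^ (0:ℝ) : ℝ) : ℂ)) = fun _ => (1 : ℂ) := by
    funext i; rw [Real.rpow_zero]; norm_num
  rw [this]
  simp only [Matrix.diagonal_one, Matrix.mul_one]
  exact self_mul_star_eigU hA

lemma mpow_one {A : Matrix (Fin d) (Fin d) ℂ} (hA : A.IsHermitian) : mpow A 1 = A := by
  rw [mpow_def hA]
  have : (fun i => ((hA.eigenvalues i ^ (1:ℝ) : ℝ) : ℂ)) = RCLike.ofReal ∘ hA.eigenvalues := by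
    funext i; rw [Real.rpow_one]; rfl
  rw [this]
  exact hA.spectral_theorem.symm

lemma mpow_posDef {A : Matrix (Fin d) (Fin d) ℂ} (hA : A.PosDef) (r : ℝ) :
    (mpow A r).PosDef := by
  rw [mpow_def hA.1, Matrix.star_eq_conjTranspose]
  apply posDef_conj
  · rw [Matrix.posDef_diagonal_iff]
    intro i
    exact Complex.zero_lt_real.mpr (Real.rpow_pos_of_pos (hA.eigenvalues_pos i) r)
  · have h := congrArg Matrix.det (self_mul_star_eigU hA.1)
    rw [Matrix.det_mul, Matrix.det_one] at h
    exact IsUnit.of_mul_eq_one _ h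

section integrals
open MeasureTheory Set

lemma contOn_base {p dd : ℝ} (hd : 0 < dd) :
    ContinuousOn (fun l : ℝ => l ^ (p-1) * (dd / (dd + l))) (Ioi 0) := by
  apply ContinuousOn.mul
  · intro l hl
    exact (Real.continuousAt_rpow_const l _ (Or.inl (ne_of_gt hl))).continuousWithinAt
  · apply ContinuousOn.div continuousOn_const (continuousOn_const.add continuousOn_id)
    intro l hl
    have : (0:ℝ) < l := hl
    exact (add_pos hd this).ne'

lemma integrableOn_base {p : ℝ} (hp0 : 0 < p) (hp1 : p < 1) {dd : ℝ} (hd : 0 < dd) :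
    IntegrableOn (fun l : ℝ => l ^ (p-1) * (dd / (dd + l))) (Ioi 0) := by
  have hmeas : AEStronglyMeasurable (fun l : ℝ => l ^ (p-1) * (dd / (dd + l)))
      (volume.restrict (Ioi (0:ℝ))) :=
    ((contOn_base hd).aestronglyMeasurable measurableSet_Ioi)
  have hIoc : IntegrableOn (fun l : ℝ => l ^ (p-1) * (dd / (dd + l))) (Ioc 0 1) := by
    have hbase : IntegrableOn (fun l : ℝ => l ^ (p-1)) (Ioc (0:ℝ) 1) := by
      have := intervalIntegral.intervalIntegrable_rpow' (a := 0) (b := 1)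
        (r := p - 1) (by linarith)
      rwa [intervalIntegrable_iff, uIoc_of_le zero_le_one] at this
    apply hbase.mono' (hmeas.mono_measure (Measure.restrict_mono Ioc_subset_Ioi_self le_rfl))
    · filter_upwards [ae_restrict_mem measurableSet_Ioc] with l hl
      have hl0 : (0:ℝ) < l := hl.1
      rw [Real.norm_eq_abs, abs_mul, abs_of_nonneg (Real.rpow_nonneg hl0.le _),
        abs_of_nonneg (by positivity)]
      nth_rewrite 2 [← mul_one (l ^ (p-1))]
      apply mul_le_mul_of_nonneg_left _ (Real.rpow_nonneg hl0.le _)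
      rw [div_le_one (by positivity)]
      linarith
  have hIoi : IntegrableOn (fun l : ℝ => l ^ (p-1) * (dd / (dd + l))) (Ioi 1) := by
    have hbase : IntegrableOn (fun l : ℝ => dd * l ^ (p-2)) (Ioi (1:ℝ)) :=
      (integrableOn_Ioi_rpow_of_lt (by linarith) one_pos).const_mul dd
    apply hbase.mono' (hmeas.mono_measure (Measure.restrict_mono (Ioi_subset_Ioi zero_le_one) le_rfl))
    · filter_upwards [ae_restrict_mem measurableSet_Ioi] with l hl
      have hl1 : (1:ℝ) < l := hl
      have hl0 : (0:ℝ) < l := by linarith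
      rw [Real.norm_eq_abs, abs_mul, abs_of_nonneg (Real.rpow_nonneg hl0.le _),
        abs_of_nonneg (by positivity)]
      have h1 : dd / (dd + l) ≤ dd / l := by
        apply div_le_div_of_nonneg_left hd.le hl0
        linarith
      calc l ^ (p-1) * (dd / (dd + l)) ≤ l ^ (p-1) * (dd / l) :=
            mul_le_mul_of_nonneg_left h1 (Real.rpow_nonneg hl0.le _)
        _ = dd * l ^ (p-2) := by
            rw [show p - 2 = (p-1) + (-1) by ring, Real.rpow_add hl0, Real.rpow_neg_one]
            field_simp
  have := hIoc.union hIoi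
  rwa [Ioc_union_Ioi_eq_Ioi zero_le_one] at this

noncomputable def cp (p : ℝ) : ℝ := ∫ l in Ioi (0:ℝ), l ^ (p-1) * (1 / (1 + l))

lemma cp_pos {p : ℝ} (hp0 : 0 < p) (hp1 : p < 1) : 0 < cp p := by
  have hint : IntegrableOn (fun l : ℝ => l ^ (p-1) * (1 / (1 + l))) (Ioi 0) :=
    integrableOn_base hp0 hp1 one_pos
  rw [cp, setIntegral_pos_iff_support_of_nonneg_ae]
  · have hsub : Ioi (0:ℝ) ⊆ Function.support (fun l : ℝ => l ^ (p-1) * (1 / (1 + l))) := by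
      intro l hl
      have hl0 : (0:ℝ) < l := hl
      have : 0 < l ^ (p-1) * (1 / (1 + l)) := by
        apply mul_pos (Real.rpow_pos_of_pos hl0 _)
        positivity
      exact ne_of_gt this
    rw [Set.inter_eq_self_of_subset_right hsub, Real.volume_Ioi]
    exact ENNReal.zero_lt_top
  · filter_upwards [ae_restrict_mem measurableSet_Ioi] with l hl
    have hl0 : (0:ℝ) < l := hl
    positivity
  · exact hint

lemma integral_base {p : ℝ} (hp0 : 0 < p) (hp1 : p < 1) {dd : ℝ} (hd : 0 < dd) :
    ∫ l in Ioi (0:ℝ), l ^ (p-1) * (dd / (dd + l)) = dd ^ p * cp p := by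
  have h := MeasureTheory.integral_comp_mul_left_Ioi
    (fun l : ℝ => l ^ (p-1) * (dd / (dd + l))) 0 hd
  rw [mul_zero] at h
  have h2 : ∫ x in Ioi (0:ℝ), (dd * x) ^ (p-1) * (dd / (dd + dd * x))
      = dd ^ (p - 1) * cp p := by
    rw [cp, ← integral_const_mul]
    apply setIntegral_congr_fun measurableSet_Ioi
    intro x hx
    have hx0 : (0:ℝ) < x := hx
    show (dd * x) ^ (p-1) * (dd / (dd + dd * x)) = dd ^ (p-1) * (x ^ (p-1) * (1 / (1 + x)))
    rw [Real.mul_rpow hd.le hx0.le]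
    have : dd / (dd + dd * x) = 1 / (1 + x) := by
      rw [div_eq_div_iff (by positivity) (by positivity)]
      ring
    rw [this]
    ring
  rw [h2, smul_eq_mul] at h
  have hI : (∫ l in Ioi (0:ℝ), l ^ (p-1) * (dd / (dd + l))) = dd * (dd ^ (p-1) * cp p) := by
    rw [h, ← mul_assoc, mul_inv_cancel₀ (ne_of_gt hd), one_mul]
  rw [hI, ← mul_assoc]
  congr 1
  nth_rewrite 1 [← Real.rpow_one dd]
  rw [← Real.rpow_add hd]
  norm_num

end integrals

section matrixSide
variable {d : ℕ}

lemma isHermitian_real_smul {M : Matrix (Fin d) (Fin d) ℂ} (hM : M.IsHermitian) (c : ℝ) :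
    (((c : ℂ)) • M).IsHermitian := by
  unfold Matrix.IsHermitian
  rw [Matrix.conjTranspose_smul, hM]
  congr 1
  simp [Complex.star_def, Complex.conj_ofReal]

lemma posDef_real_smul {M : Matrix (Fin d) (Fin d) ℂ} (hM : M.PosDef)
    {c : ℝ} (hc : 0 < c) : ((c : ℂ) • M).PosDef := by
  refine Matrix.PosDef.of_dotProduct_mulVec_pos (isHermitian_real_smul hM.1 c) (fun x hx => ?_)
  rw [Matrix.smul_mulVec, dotProduct_smul, smul_eq_mul]
  exact mul_pos (Complex.zero_lt_real.mpr hc) (hM.dotProduct_mulVec_pos hx)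

lemma posDef_comb {M N : Matrix (Fin d) (Fin d) ℂ} (hM : M.PosDef) (hN : N.PosDef)
    {α β : ℝ} (hα : 0 ≤ α) (hβ : 0 ≤ β) (h : 0 < α ∨ 0 < β) :
    ((α : ℂ) • M + (β : ℂ) • N).PosDef := by
  rcases eq_or_lt_of_le hα with hα0 | hα0
  · rcases h with h | h
    · exact absurd hα0.symm (ne_of_gt h)
    · rw [← hα0]
      simpa using ((posDef_real_smul hN h).add_posSemidef (Matrix.PosSemidef.zero))
  · exact (posDef_real_smul hM hα0).add_posSemidef (posSemidef_smul_real hN.posSemidef hβ)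

lemma qf_conj' {S M : Matrix (Fin d) (Fin d) ℂ} (hS : S.IsHermitian) (x : Fin d → ℂ) :
    star x ⬝ᵥ ((S * M * S) *ᵥ x) = star (S *ᵥ x) ⬝ᵥ (M *ᵥ (S *ᵥ x)) := by
  nth_rewrite 1 [← hS]
  exact qf_conj S M x

lemma qf_unitary {U M : Matrix (Fin d) (Fin d) ℂ} (x : Fin d → ℂ) :
    star x ⬝ᵥ ((U * M * star U) *ᵥ x) = star (star U *ᵥ x) ⬝ᵥ (M *ᵥ (star U *ᵥ x)) := by
  have h : U = (star U)ᴴ := by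
    rw [Matrix.star_eq_conjTranspose, Matrix.conjTranspose_conjTranspose]
  nth_rewrite 1 [h]
  rw [← Matrix.star_eq_conjTranspose]
  exact qf_conj (star U) M x

lemma qf_diagonal (f : Fin d → ℝ) (z : Fin d → ℂ) :
    star z ⬝ᵥ ((Matrix.diagonal (fun i => ((f i : ℝ) : ℂ))) *ᵥ z)
      = ((∑ i, Complex.normSq (z i) * f i : ℝ) : ℂ) := by
  push_cast
  simp only [dotProduct, Matrix.mulVec_diagonal, Pi.star_apply]
  apply Finset.sum_congr rfl
  intro i _
  rw [Complex.normSq_eq_conj_mul_self, Complex.star_def]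
  ring

lemma mpow_half_mul {A : Matrix (Fin d) (Fin d) ℂ} (hA : A.PosDef) :
    mpow A (1/2) * mpow A (-(1/2)) = 1 := by
  rw [mpow_mul_mpow hA, show (1/2 + -(1/2) : ℝ) = 0 by norm_num, mpow_zero hA.1]

lemma mpow_neg_half_mul {A : Matrix (Fin d) (Fin d) ℂ} (hA : A.PosDef) :
    mpow A (-(1/2)) * mpow A (1/2) = 1 := by
  rw [mpow_mul_mpow hA, show (-(1/2) + 1/2 : ℝ) = 0 by norm_num, mpow_zero hA.1]

lemma mpow_half_mul_self {A : Matrix (Fin d) (Fin d) ℂ} (hA : A.PosDef) :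
    mpow A (1/2) * mpow A (1/2) = A := by
  rw [mpow_mul_mpow hA, show (1/2 + 1/2 : ℝ) = 1 by norm_num, mpow_one hA.1]

lemma mul_mpow_neg_half {A : Matrix (Fin d) (Fin d) ℂ} (hA : A.PosDef) :
    A * mpow A (-(1/2)) = mpow A (1/2) := by
  nth_rewrite 1 [← mpow_one hA.1]
  rw [mpow_mul_mpow hA, show (1 + -(1/2) : ℝ) = 1/2 by norm_num]

lemma mpow_neg_half_mul_self {A : Matrix (Fin d) (Fin d) ℂ} (hA : A.PosDef) :
    mpow A (-(1/2)) * A = mpow A (1/2) := by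
  nth_rewrite 2 [← mpow_one hA.1]
  rw [mpow_mul_mpow hA, show (-(1/2) + 1 : ℝ) = 1/2 by norm_num]

lemma posDef_inner {A B : Matrix (Fin d) (Fin d) ℂ} (hA : A.PosDef) (hB : B.PosDef) :
    (mpow A (-(1/2)) * B * mpow A (-(1/2))).PosDef := by
  have hT := mpow_posDef hA (-(1/2))
  have h : mpow A (-(1/2)) * B * mpow A (-(1/2))
      = mpow A (-(1/2)) * B * (mpow A (-(1/2)))ᴴ := by
    rw [mpow_isHermitian]
  rw [h]
  exact posDef_conj hB ((Matrix.isUnit_iff_isUnit_det _).mp hT.isUnit)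

end matrixSide

section pairRep
variable {d : ℕ}

lemma pair_rep (A B : Matrix (Fin d) (Fin d) ℂ) (hA : A.PosDef) (hB : B.PosDef)
    (x : Fin d → ℂ) (p : ℝ) :
    ∃ w e : Fin d → ℝ, (∀ i, 0 ≤ w i) ∧ (∀ i, 0 < e i) ∧
      star x ⬝ᵥ (A *ᵥ x) = ((∑ i, w i : ℝ) : ℂ) ∧
      star x ⬝ᵥ ((mpow A (1/2) * mpow (mpow A (-(1/2)) * B * mpow A (-(1/2))) p *
          mpow A (1/2)) *ᵥ x) = ((∑ i, w i * e i ^ p : ℝ) : ℂ) ∧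
      ∀ l : ℝ, 0 < l →
        star x ⬝ᵥ ((A * (B + (l : ℂ) • A)⁻¹ * A) *ᵥ x)
          = ((∑ i, w i * (e i + l)⁻¹ : ℝ) : ℂ) := by
  set S := mpow A (1/2) with hSdef
  set T := mpow A (-(1/2)) with hTdef
  set C := T * B * T with hCdef
  have hC : C.PosDef := posDef_inner hA hB
  have hCh : C.IsHermitian := hC.1
  set U : Matrix (Fin d) (Fin d) ℂ := (hCh.eigenvectorUnitary : Matrix (Fin d) (Fin d) ℂ)
    with hUdef
  set e := hCh.eigenvalues with hedef
  have hSh : S.IsHermitian := by rw [hSdef]; exact mpow_isHermitian A _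
  have hST : S * T = 1 := by rw [hSdef, hTdef]; exact mpow_half_mul hA
  have hTS : T * S = 1 := by rw [hSdef, hTdef]; exact mpow_neg_half_mul hA
  have hSS : S * S = A := by rw [hSdef]; exact mpow_half_mul_self hA
  have hAT : A * T = S := by rw [hSdef, hTdef]; exact mul_mpow_neg_half hA
  have hTA : T * A = S := by rw [hSdef, hTdef]; exact mpow_neg_half_mul_self hA
  have hUsU : U * star U = 1 := self_mul_star_eigU hCh
  have hsUU : star U * U = 1 := star_mul_self_eigU hCh
  have hCspec : C = U * Matrix.diagonal (RCLike.ofReal ∘ e) * star U := hCh.spectral_theorem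
  have hepos : ∀ i, 0 < e i := fun i => hC.eigenvalues_pos i
  refine ⟨fun i => Complex.normSq ((star U *ᵥ (S *ᵥ x)) i), e,
    fun i => Complex.normSq_nonneg _, hepos, ?_, ?_, ?_⟩
  · -- qf of A
    have hd1 : A = S * (U * Matrix.diagonal (fun i => (((fun _ : Fin d => (1:ℝ)) i : ℝ) : ℂ))
        * star U) * S := by
      have : Matrix.diagonal (fun i => (((fun _ : Fin d => (1:ℝ)) i : ℝ) : ℂ)) = 1 := by
        simp
      rw [this, Matrix.mul_one, hUsU, Matrix.mul_one, hSS]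
    nth_rewrite 1 [hd1]
    rw [qf_conj' hSh, qf_unitary, qf_diagonal]
    norm_num
  · -- qf of the power term
    have hd2 : mpow C p = U * Matrix.diagonal (fun i => ((e i ^ p : ℝ) : ℂ)) * star U :=
      mpow_def hCh p
    rw [hd2, qf_conj' hSh, qf_unitary, qf_diagonal]
  · -- resolvent
    intro l hl
    have hel : ∀ i, 0 < e i + l := fun i => by have := hepos i; linarith
    set Dl := Matrix.diagonal (fun i => ((e i + l : ℝ) : ℂ)) with hDldef
    set Dli := Matrix.diagonal (fun i => (((e i + l)⁻¹ : ℝ) : ℂ)) with hDlidef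
    have hDl : U * Dl * star U = C + (l : ℂ) • 1 := by
      have hsplit : Dl = Matrix.diagonal (RCLike.ofReal ∘ e) + (l : ℂ) • 1 := by
        have hdl : Matrix.diagonal (fun _ : Fin d => (l : ℂ)) = (l : ℂ) • (1 : Matrix (Fin d) (Fin d) ℂ) := by
          ext i j
          by_cases h : i = j <;> simp [Matrix.diagonal_apply, Matrix.one_apply, h]
        rw [← hdl, Matrix.diagonal_add]
        rw [hDldef]
        congr 1
        funext i
        push_cast
        rfl
      calc U * Dl * star U
          = U * Matrix.diagonal (RCLike.ofReal ∘ e) * star U + (l : ℂ) • (U * 1 * star U) := by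
            rw [hsplit, Matrix.mul_add, Matrix.add_mul, mul_smul_comm, smul_mul_assoc]
        _ = C + (l : ℂ) • 1 := by rw [← hCspec, Matrix.mul_one, hUsU]
    have hSCS : S * C * S = B := by
      rw [hCdef]
      calc S * (T * B * T) * S = (S * T) * B * (T * S) := by simp only [Matrix.mul_assoc]
        _ = B := by rw [hST, hTS, Matrix.one_mul, Matrix.mul_one]
    have hBA : B + (l : ℂ) • A = S * (U * Dl * star U) * S := by
      rw [hDl]
      symm
      calc S * (C + (l : ℂ) • 1) * S
          = S * C * S + (l : ℂ) • (S * 1 * S) := by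
            rw [Matrix.mul_add, Matrix.add_mul, mul_smul_comm, smul_mul_assoc]
        _ = B + (l : ℂ) • A := by rw [hSCS, Matrix.mul_one, hSS]
    have hDD : Dl * Dli = 1 := by
      rw [hDldef, hDlidef, Matrix.diagonal_mul_diagonal]
      rw [show (fun i => ((e i + l : ℝ) : ℂ) * (((e i + l)⁻¹ : ℝ) : ℂ)) = (fun _ : Fin d => (1:ℂ)) from
        funext fun i => by rw [← Complex.ofReal_mul, mul_inv_cancel₀ (ne_of_gt (hel i))]; norm_num,
        Matrix.diagonal_one]
    have hinv : (B + (l : ℂ) • A)⁻¹ = T * (U * Dli * star U) * T := by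
      apply Matrix.inv_eq_right_inv
      rw [hBA]
      have c1 : ∀ X : Matrix (Fin d) (Fin d) ℂ, S * (T * X) = X := fun X => by
        rw [← Matrix.mul_assoc, hST, Matrix.one_mul]
      have c2 : ∀ X : Matrix (Fin d) (Fin d) ℂ, star U * (U * X) = X := fun X => by
        rw [← Matrix.mul_assoc, hsUU, Matrix.one_mul]
      have c3 : ∀ X : Matrix (Fin d) (Fin d) ℂ, Dl * (Dli * X) = X := fun X => by
        rw [← Matrix.mul_assoc, hDD, Matrix.one_mul]
      have c4 : ∀ X : Matrix (Fin d) (Fin d) ℂ, U * (star U * X) = X := fun X => by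
        rw [← Matrix.mul_assoc, hUsU, Matrix.one_mul]
      simp only [Matrix.mul_assoc, c1, c2, c3, c4, hST]
    have hfin : A * (B + (l : ℂ) • A)⁻¹ * A = S * (U * Dli * star U) * S := by
      rw [hinv]
      calc A * (T * (U * Dli * star U) * T) * A
          = (A * T) * (U * Dli * star U) * (T * A) := by simp only [Matrix.mul_assoc]
        _ = S * (U * Dli * star U) * S := by rw [hAT, hTA]
    rw [hfin, qf_conj' hSh, qf_unitary, qf_diagonal]

end pairRep

section schur
variable {d : ℕ}

lemma qf_add (M N : Matrix (Fin d) (Fin d) ℂ) (x : Fin d → ℂ) :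
    star x ⬝ᵥ ((M + N) *ᵥ x) = star x ⬝ᵥ (M *ᵥ x) + star x ⬝ᵥ (N *ᵥ x) := by
  rw [Matrix.add_mulVec, dotProduct_add]

lemma qf_sub (M N : Matrix (Fin d) (Fin d) ℂ) (x : Fin d → ℂ) :
    star x ⬝ᵥ ((M - N) *ᵥ x) = star x ⬝ᵥ (M *ᵥ x) - star x ⬝ᵥ (N *ᵥ x) := by
  rw [Matrix.sub_mulVec, dotProduct_sub]

lemma qf_smul (c : ℂ) (M : Matrix (Fin d) (Fin d) ℂ) (x : Fin d → ℂ) :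
    star x ⬝ᵥ ((c • M) *ᵥ x) = c * (star x ⬝ᵥ (M *ᵥ x)) := by
  rw [Matrix.smul_mulVec, dotProduct_smul, smul_eq_mul]

lemma schur_convexity {A₁ A₂ C₁ C₂ : Matrix (Fin d) (Fin d) ℂ}
    (hA₁ : A₁.IsHermitian) (hA₂ : A₂.IsHermitian)
    (hC₁ : C₁.PosDef) (hC₂ : C₂.PosDef) {α β : ℝ} (hα : 0 ≤ α) (hβ : 0 ≤ β)
    (hCbar : ((α : ℂ) • C₁ + (β : ℂ) • C₂).PosDef) :
    ((α : ℂ) • (A₁ * C₁⁻¹ * A₁) + (β : ℂ) • (A₂ * C₂⁻¹ * A₂)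
      - ((α : ℂ) • A₁ + (β : ℂ) • A₂) * ((α : ℂ) • C₁ + (β : ℂ) • C₂)⁻¹
        * ((α : ℂ) • A₁ + (β : ℂ) • A₂)).PosSemidef := by
  have hM₁ : (Matrix.fromBlocks C₁ A₁ A₁ᴴ (A₁ * C₁⁻¹ * A₁)).PosSemidef := by
    haveI := hC₁.isUnit.invertible
    rw [Matrix.PosDef.fromBlocks₁₁ _ _ hC₁, hA₁, sub_self]
    exact Matrix.PosSemidef.zero
  have hM₂ : (Matrix.fromBlocks C₂ A₂ A₂ᴴ (A₂ * C₂⁻¹ * A₂)).PosSemidef := by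
    haveI := hC₂.isUnit.invertible
    rw [Matrix.PosDef.fromBlocks₁₁ _ _ hC₂, hA₂, sub_self]
    exact Matrix.PosSemidef.zero
  have hsum := (posSemidef_smul_real hM₁ hα).add (posSemidef_smul_real hM₂ hβ)
  have hconj : (α : ℂ) • A₁ᴴ + (β : ℂ) • A₂ᴴ = ((α : ℂ) • A₁ + (β : ℂ) • A₂)ᴴ := by
    rw [Matrix.conjTranspose_add, Matrix.conjTranspose_smul, Matrix.conjTranspose_smul]
    congr 1 <;> congr 1 <;> simp [Complex.star_def, Complex.conj_ofReal]
  have hblock : (α : ℂ) • Matrix.fromBlocks C₁ A₁ A₁ᴴ (A₁ * C₁⁻¹ * A₁)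
      + (β : ℂ) • Matrix.fromBlocks C₂ A₂ A₂ᴴ (A₂ * C₂⁻¹ * A₂)
      = Matrix.fromBlocks ((α : ℂ) • C₁ + (β : ℂ) • C₂) ((α : ℂ) • A₁ + (β : ℂ) • A₂)
          ((α : ℂ) • A₁ + (β : ℂ) • A₂)ᴴ
          ((α : ℂ) • (A₁ * C₁⁻¹ * A₁) + (β : ℂ) • (A₂ * C₂⁻¹ * A₂)) := by
    rw [Matrix.fromBlocks_smul, Matrix.fromBlocks_smul, Matrix.fromBlocks_add, ← hconj]
  rw [hblock] at hsum
  haveI := hCbar.isUnit.invertible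
  have hres := (Matrix.PosDef.fromBlocks₁₁ _ _ hCbar).mp hsum
  have hAbar : ((α : ℂ) • A₁ + (β : ℂ) • A₂)ᴴ = (α : ℂ) • A₁ + (β : ℂ) • A₂ :=
    ((isHermitian_real_smul hA₁ α).add (isHermitian_real_smul hA₂ β))
  rwa [hAbar] at hres

end schur

section assembly
open MeasureTheory Set
variable {d : ℕ}

lemma pair_integrable {p : ℝ} (hp0 : 0 < p) (hp1 : p < 1) (w e : Fin d → ℝ)
    (he : ∀ i, 0 < e i) :
    IntegrableOn (fun l : ℝ => ∑ i, w i * (l ^ (p-1) * (e i / (e i + l)))) (Ioi 0) := by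
  apply MeasureTheory.integrable_finset_sum
  intro i _
  exact (integrableOn_base hp0 hp1 (he i)).const_mul (w i)

lemma pair_integral {p : ℝ} (hp0 : 0 < p) (hp1 : p < 1) (w e : Fin d → ℝ)
    (he : ∀ i, 0 < e i) :
    ∫ l in Ioi (0:ℝ), (∑ i, w i * (l ^ (p-1) * (e i / (e i + l))))
      = cp p * ∑ i, w i * e i ^ p := by
  rw [MeasureTheory.integral_finset_sum _
    (fun i _ => (integrableOn_base hp0 hp1 (he i)).const_mul (w i))]
  rw [Finset.mul_sum]
  apply Finset.sum_congr rfl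
  intro i _
  rw [MeasureTheory.integral_const_mul, integral_base hp0 hp1 (he i)]
  ring

lemma pair_bridge {p : ℝ} (w e : Fin d → ℝ) (he : ∀ i, 0 < e i) {l : ℝ} (hl : 0 < l) :
    (∑ i, w i * (l ^ (p-1) * (e i / (e i + l))))
      = l ^ (p-1) * ((∑ i, w i) - l * (∑ i, w i * (e i + l)⁻¹)) := by
  rw [mul_sub, Finset.mul_sum, Finset.mul_sum, Finset.mul_sum, ← Finset.sum_sub_distrib]
  apply Finset.sum_congr rfl
  intro i _
  have hei : 0 < e i + l := by have := he i; linarith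
  field_simp
  ring

lemma Tq_isHermitian {ρ σ : Matrix (Fin d) (Fin d) ℂ} (hρ : ρ.PosDef) (q : ℝ) :
    (Tq ρ σ q).IsHermitian := by
  unfold Tq
  rw [show (((1 - q : ℝ) : ℂ))⁻¹ = (((1 - q)⁻¹ : ℝ) : ℂ) by push_cast; ring]
  apply isHermitian_real_smul
  apply Matrix.IsHermitian.sub _ hρ.1
  have h := Matrix.isHermitian_mul_mul_conjTranspose (mpow ρ (1/2))
    (mpow_isHermitian (mpow ρ (-(1/2)) * σ * mpow ρ (-(1/2))) (1 - q))
  rwa [(mpow_isHermitian ρ (1/2) : _ᴴ = _)] at h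

lemma mpow_zero_matrix {r : ℝ} (hr : r ≠ 0) : mpow (0 : Matrix (Fin d) (Fin d) ℂ) r = 0 := by
  have h0 : (0 : Matrix (Fin d) (Fin d) ℂ).IsHermitian := Matrix.isHermitian_zero
  have hdiag := h0.conjStarAlgAut_star_eigenvectorUnitary
  rw [map_zero] at hdiag
  have he : ∀ i, h0.eigenvalues i = 0 := by
    intro i
    have := congrFun (congrFun hdiag i) i
    rw [Matrix.diagonal_apply_eq] at this
    have : (h0.eigenvalues i : ℂ) = 0 := this.symm
    exact_mod_cast this
  rw [mpow_def h0]
  have : (fun i => ((h0.eigenvalues i ^ r : ℝ) : ℂ)) = fun _ => (0 : ℂ) := by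
    funext i
    rw [he i, Real.zero_rpow hr]
    norm_num
  rw [this, Matrix.diagonal_zero, Matrix.mul_zero, Matrix.zero_mul]

lemma Tq_zero_zero {q : ℝ} (hq : q < 1) : Tq (0 : Matrix (Fin d) (Fin d) ℂ) 0 q = 0 := by
  unfold Tq
  rw [mpow_zero_matrix (by norm_num : (1/2 : ℝ) ≠ 0)]
  simp

lemma Tq_q_zero {ρ σ : Matrix (Fin d) (Fin d) ℂ} (hρ : ρ.PosDef) (hσ : σ.PosDef) :
    Tq ρ σ 0 = σ - ρ := by
  unfold Tq
  have hC : (mpow ρ (-(1/2)) * σ * mpow ρ (-(1/2))).PosDef := posDef_inner hρ hσ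
  rw [show (1 - (0:ℝ)) = 1 by norm_num, mpow_one hC.1]
  have hmid : mpow ρ (1/2) * (mpow ρ (-(1/2)) * σ * mpow ρ (-(1/2))) * mpow ρ (1/2) = σ := by
    calc mpow ρ (1/2) * (mpow ρ (-(1/2)) * σ * mpow ρ (-(1/2))) * mpow ρ (1/2)
        = (mpow ρ (1/2) * mpow ρ (-(1/2))) * σ * (mpow ρ (-(1/2)) * mpow ρ (1/2)) := by
          simp only [Matrix.mul_assoc]
      _ = σ := by rw [mpow_half_mul hρ, mpow_neg_half_mul hρ, Matrix.one_mul, Matrix.mul_one]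
  rw [hmid]
  norm_num

end assembly

open MeasureTheory Set in
theorem tsallis_operator_entropy_joint_concavity {d : ℕ}
    (ρ₁ ρ₂ σ₁ σ₂ : Matrix (Fin d) (Fin d) ℂ)
    (hρ₁ : ρ₁.PosDef) (hρ₂ : ρ₂.PosDef) (hσ₁ : σ₁.PosDef) (hσ₂ : σ₂.PosDef)
    (α β : ℝ) (hα : 0 ≤ α) (hβ : 0 ≤ β) (q : ℝ) (hq0 : 0 ≤ q) (hq1 : q < 1) :
    (Tq ((α : ℂ) • ρ₁ + (β : ℂ) • ρ₂) ((α : ℂ) • σ₁ + (β : ℂ) • σ₂) q -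
      ((α : ℂ) • Tq ρ₁ σ₁ q + (β : ℂ) • Tq ρ₂ σ₂ q)).PosSemidef := by
  by_cases hzero : α = 0 ∧ β = 0
  · obtain ⟨h1, h2⟩ := hzero
    subst h1; subst h2
    simp only [Complex.ofReal_zero, zero_smul, add_zero, zero_add, sub_zero]
    rw [Tq_zero_zero hq1]
    exact Matrix.PosSemidef.zero
  · have hor : 0 < α ∨ 0 < β := by
      rcases lt_or_eq_of_le hα with h | h
      · exact Or.inl h
      · rcases lt_or_eq_of_le hβ with h' | h'
        · exact Or.inr h'
        · exact absurd ⟨h.symm, h'.symm⟩ hzero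
    have hρb : ((α : ℂ) • ρ₁ + (β : ℂ) • ρ₂).PosDef := posDef_comb hρ₁ hρ₂ hα hβ hor
    have hσb : ((α : ℂ) • σ₁ + (β : ℂ) • σ₂).PosDef := posDef_comb hσ₁ hσ₂ hα hβ hor
    rcases eq_or_lt_of_le hq0 with hq | hq
    · rw [← hq, Tq_q_zero hρb hσb, Tq_q_zero hρ₁ hσ₁, Tq_q_zero hρ₂ hσ₂]
      have hz : ((α : ℂ) • σ₁ + (β : ℂ) • σ₂) - ((α : ℂ) • ρ₁ + (β : ℂ) • ρ₂) -
          ((α : ℂ) • (σ₁ - ρ₁) + (β : ℂ) • (σ₂ - ρ₂)) = 0 := by module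
      rw [hz]
      exact Matrix.PosSemidef.zero
    · have hp0 : 0 < 1 - q := by linarith
      have hp1 : 1 - q < 1 := by linarith
      refine Matrix.PosSemidef.of_dotProduct_mulVec_nonneg ?_ ?_
      · exact (Tq_isHermitian hρb q).sub
          ((isHermitian_real_smul (Tq_isHermitian hρ₁ q) α).add
            (isHermitian_real_smul (Tq_isHermitian hρ₂ q) β))
      · intro x
        obtain ⟨wb, eb, hwb, heb, hAb, hPb, hRb⟩ := pair_rep _ _ hρb hσb x (1 - q)
        obtain ⟨w1, e1, hw1, he1, hA1, hP1, hR1⟩ := pair_rep _ _ hρ₁ hσ₁ x (1 - q)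
        obtain ⟨w2, e2, hw2, he2, hA2, hP2, hR2⟩ := pair_rep _ _ hρ₂ hσ₂ x (1 - q)
        have hwbar : (∑ i, wb i) = α * (∑ i, w1 i) + β * (∑ i, w2 i) := by
          have h1 : ((∑ i, wb i : ℝ) : ℂ) = ((α * (∑ i, w1 i) + β * (∑ i, w2 i) : ℝ) : ℂ) := by
            rw [← hAb, qf_add, qf_smul, qf_smul, hA1, hA2]
            push_cast
            ring
          exact_mod_cast h1
        have hconv : ∀ l : ℝ, 0 < l →
            (∑ i, wb i * (eb i + l)⁻¹) ≤
              α * (∑ i, w1 i * (e1 i + l)⁻¹) + β * (∑ i, w2 i * (e2 i + l)⁻¹) := by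
          intro l hl
          have hC1 : (σ₁ + (l : ℂ) • ρ₁).PosDef := hσ₁.add (posDef_real_smul hρ₁ hl)
          have hC2 : (σ₂ + (l : ℂ) • ρ₂).PosDef := hσ₂.add (posDef_real_smul hρ₂ hl)
          have hcomb : (α : ℂ) • (σ₁ + (l : ℂ) • ρ₁) + (β : ℂ) • (σ₂ + (l : ℂ) • ρ₂)
              = ((α : ℂ) • σ₁ + (β : ℂ) • σ₂) + (l : ℂ) • ((α : ℂ) • ρ₁ + (β : ℂ) • ρ₂) := by
            module
          have hCbar : ((α : ℂ) • (σ₁ + (l : ℂ) • ρ₁) + (β : ℂ) • (σ₂ + (l : ℂ) • ρ₂)).PosDef := by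
            rw [hcomb]
            exact hσb.add (posDef_real_smul hρb hl)
          have h0 := (schur_convexity hρ₁.1 hρ₂.1 hC1 hC2 hα hβ hCbar).dotProduct_mulVec_nonneg x
          rw [qf_sub, qf_add, qf_smul, qf_smul, hcomb, hR1 l hl, hR2 l hl, hRb l hl] at h0
          have h0' : (0 : ℂ) ≤ ((α * (∑ i, w1 i * (e1 i + l)⁻¹)
              + β * (∑ i, w2 i * (e2 i + l)⁻¹) - (∑ i, wb i * (eb i + l)⁻¹) : ℝ) : ℂ) := by
            convert h0 using 1
            push_cast
            ring
          rw [Complex.zero_le_real] at h0'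
          linarith
        have hI1 : IntegrableOn
            (fun l : ℝ => ∑ i, w1 i * (l ^ (1 - q - 1) * (e1 i / (e1 i + l)))) (Ioi 0) :=
          pair_integrable hp0 hp1 w1 e1 he1
        have hI2 : IntegrableOn
            (fun l : ℝ => ∑ i, w2 i * (l ^ (1 - q - 1) * (e2 i / (e2 i + l)))) (Ioi 0) :=
          pair_integrable hp0 hp1 w2 e2 he2
        have hIb : IntegrableOn
            (fun l : ℝ => ∑ i, wb i * (l ^ (1 - q - 1) * (eb i / (eb i + l)))) (Ioi 0) :=
          pair_integrable hp0 hp1 wb eb heb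
        have key : α * (∑ i, w1 i * e1 i ^ (1 - q)) + β * (∑ i, w2 i * e2 i ^ (1 - q))
            ≤ (∑ i, wb i * eb i ^ (1 - q)) := by
          have hnonneg : ∀ l ∈ Ioi (0:ℝ),
              0 ≤ (∑ i, wb i * (l ^ (1 - q - 1) * (eb i / (eb i + l))))
                - (α * (∑ i, w1 i * (l ^ (1 - q - 1) * (e1 i / (e1 i + l))))
                  + β * (∑ i, w2 i * (l ^ (1 - q - 1) * (e2 i / (e2 i + l))))) := by
            intro l hl
            have hl0 : (0:ℝ) < l := hl
            rw [pair_bridge wb eb heb hl0, pair_bridge w1 e1 he1 hl0, pair_bridge w2 e2 he2 hl0]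
            have heq : l ^ (1 - q - 1) * ((∑ i, wb i) - l * (∑ i, wb i * (eb i + l)⁻¹))
                - (α * (l ^ (1 - q - 1) * ((∑ i, w1 i) - l * (∑ i, w1 i * (e1 i + l)⁻¹)))
                  + β * (l ^ (1 - q - 1) * ((∑ i, w2 i) - l * (∑ i, w2 i * (e2 i + l)⁻¹))))
                = l ^ (1 - q - 1) * (l * ((α * (∑ i, w1 i * (e1 i + l)⁻¹)
                  + β * (∑ i, w2 i * (e2 i + l)⁻¹)) - (∑ i, wb i * (eb i + l)⁻¹))) := by
              rw [hwbar]
              ring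
            rw [heq]
            apply mul_nonneg (Real.rpow_nonneg hl0.le _)
            apply mul_nonneg hl0.le
            have := hconv l hl0
            linarith
          have hintdiff := setIntegral_nonneg (μ := volume) measurableSet_Ioi hnonneg
          have hI1' : IntegrableOn
              (fun l : ℝ => α * ∑ i, w1 i * (l ^ (1 - q - 1) * (e1 i / (e1 i + l)))) (Ioi 0) :=
            hI1.const_mul α
          have hI2' : IntegrableOn
              (fun l : ℝ => β * ∑ i, w2 i * (l ^ (1 - q - 1) * (e2 i / (e2 i + l)))) (Ioi 0) :=
            hI2.const_mul β
          have hI12 : IntegrableOn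
              (fun l : ℝ => α * (∑ i, w1 i * (l ^ (1 - q - 1) * (e1 i / (e1 i + l))))
                + β * (∑ i, w2 i * (l ^ (1 - q - 1) * (e2 i / (e2 i + l))))) (Ioi 0) :=
            hI1'.add hI2'
          rw [integral_sub hIb hI12,
            integral_add hI1' hI2',
            MeasureTheory.integral_const_mul, MeasureTheory.integral_const_mul,
            pair_integral hp0 hp1 wb eb heb, pair_integral hp0 hp1 w1 e1 he1,
            pair_integral hp0 hp1 w2 e2 he2] at hintdiff
          have hcp := cp_pos hp0 hp1
          nlinarith
        have hqf : star x ⬝ᵥ ((Tq ((α : ℂ) • ρ₁ + (β : ℂ) • ρ₂)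
              ((α : ℂ) • σ₁ + (β : ℂ) • σ₂) q -
            ((α : ℂ) • Tq ρ₁ σ₁ q + (β : ℂ) • Tq ρ₂ σ₂ q)) *ᵥ x)
            = (((1 - q)⁻¹ * ((∑ i, wb i * eb i ^ (1 - q))
              - (α * (∑ i, w1 i * e1 i ^ (1 - q)) + β * (∑ i, w2 i * e2 i ^ (1 - q)))) : ℝ) : ℂ) := by
          simp only [Tq, qf_sub, qf_add, qf_smul]
          rw [hPb, hP1, hP2, hA1, hA2]
          push_cast
          ring
        rw [hqf, Complex.zero_le_real]
        apply mul_nonneg (inv_nonneg.mpr (by linarith))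
        linarith
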